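/- Deterministic one-step squared-distance contraction: let w ∈ W be fixed, let e ∈ ℝ^d satisfy ‖e‖ ≤ ε, and set w⁺ := w − α(∇f(w) + e). Then ‖w⁺ − w*‖² ≤ ‖w − w*‖² − (2α − 4Lα²)·(f(w) − f(w*)) + 2α²ε² + 2α·ε·R. -/

import Mathlib

/-!
Expand `‖w - α (g + e) - w*‖²` with `g = ∇f(w)`. The cross term `⟪g, w - w*⟫` dominates the gap
`f(w) - f(w*)` by convexity; the quadratic term is controlled through `‖g + e‖² ≤ 2‖g‖² + 2‖e‖²`
and `‖g‖² ≤ 2L (f(w) - f(w*))`, which follows from the descent lemma applied to the gradient step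
of length `1/L` from `w`; the noise cross term is at most `ε R` by Cauchy–Schwarz and the diameter
bound.
-/

open RealInnerProductSpace Set AffineMap

section

variable {E : Type*} [NormedAddCommGroup E] [InnerProductSpace ℝ E] [CompleteSpace E]
  {f : E → ℝ}

theorem HasGradientAt.hasDerivAt_comp_lineMap {g x y : E} {t : ℝ}
    (hf : HasGradientAt f g (lineMap x y t)) :
    HasDerivAt (fun s : ℝ => f (lineMap x y s)) ⟪g, y - x⟫ t := by
  have h := (hasGradientAt_iff_hasFDerivAt.mp hf).comp_hasDerivAt t hasDerivAt_lineMap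
  simp only [InnerProductSpace.toDual_apply_apply] at h
  exact h

theorem ConvexOn.add_inner_gradient_le (hf : ConvexOn ℝ univ f) {x : E}
    (hx : DifferentiableAt ℝ f x) (y : E) : f x + ⟪gradient f x, y - x⟫ ≤ f y := by
  have hline : ConvexOn ℝ univ (fun s : ℝ => f (lineMap x y s)) := by
    have h := hf.comp_affineMap (lineMap x y : ℝ →ᵃ[ℝ] E)
    rwa [preimage_univ] at h
  have hderiv : HasDerivAt (fun s : ℝ => f (lineMap x y s)) ⟪gradient f x, y - x⟫ 0 :=
    HasGradientAt.hasDerivAt_comp_lineMap (by simpa using hx.hasGradientAt)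
  have := hline.le_slope_of_hasDerivAt (mem_univ 0) (mem_univ 1) one_pos hderiv
  simp only [slope_def_field, lineMap_apply_zero, lineMap_apply_one, sub_zero, div_one] at this
  linarith

theorem le_add_inner_gradient_add_sq_of_lipschitz_gradient {L : ℝ} (hf : Differentiable ℝ f)
    (hL : ∀ x y, ‖gradient f x - gradient f y‖ ≤ L * ‖x - y‖) (x y : E) :
    f y ≤ f x + ⟪gradient f x, y - x⟫ + L / 2 * ‖y - x‖ ^ 2 := by
  set v := y - x
  set B : ℝ → ℝ := fun s => f x + s * ⟪gradient f x, v⟫ + L / 2 * s ^ 2 * ‖v‖ ^ 2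
  have hderiv (t : ℝ) :
      HasDerivAt (fun s : ℝ => f (lineMap x y s)) ⟪gradient f (lineMap x y t), v⟫ t :=
    (hf _).hasGradientAt.hasDerivAt_comp_lineMap
  have hbound (t : ℝ) : HasDerivAt B (⟪gradient f x, v⟫ + L * t * ‖v‖ ^ 2) t := by
    refine ((((hasDerivAt_id' t).mul_const ⟪gradient f x, v⟫).const_add (f x)).add
      (((hasDerivAt_pow 2 t).const_mul (L / 2)).mul_const (‖v‖ ^ 2))).congr_deriv ?_
    push_cast
    ring
  have hslope {t : ℝ} (ht : 0 ≤ t) :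
      ⟪gradient f (lineMap x y t), v⟫ ≤ ⟪gradient f x, v⟫ + L * t * ‖v‖ ^ 2 :=
    calc ⟪gradient f (lineMap x y t), v⟫
        = ⟪gradient f x, v⟫ + ⟪gradient f (lineMap x y t) - gradient f x, v⟫ := by
          rw [inner_sub_left]; ring
      _ ≤ ⟪gradient f x, v⟫ + ‖gradient f (lineMap x y t) - gradient f x‖ * ‖v‖ := by
          gcongr; exact real_inner_le_norm _ _
      _ ≤ ⟪gradient f x, v⟫ + L * ‖lineMap x y t - x‖ * ‖v‖ := by gcongr; exact hL _ _
      _ = ⟪gradient f x, v⟫ + L * t * ‖v‖ ^ 2 := by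
          rw [← vsub_eq_sub, lineMap_vsub_left, vsub_eq_sub, norm_smul, Real.norm_of_nonneg ht]
          ring
  have := image_le_of_deriv_right_le_deriv_boundary (a := 0) (b := 1) (B := B)
    (fun t _ => (hderiv t).continuousAt.continuousWithinAt)
    (fun t _ => (hderiv t).hasDerivWithinAt) (by simp [B])
    (fun t _ => (hbound t).continuousAt.continuousWithinAt)
    (fun t _ => (hbound t).hasDerivWithinAt) (fun t ht => hslope ht.1)
    (right_mem_Icc.2 zero_le_one)
  simpa [B] using this

theorem norm_sq_gradient_le_of_lipschitz_gradient {L : ℝ} (hf : Differentiable ℝ f)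
    (hL : ∀ x y, ‖gradient f x - gradient f y‖ ≤ L * ‖x - y‖) {x₀ : E}
    (hx₀ : gradient f x₀ = 0) (hmin : ∀ x, f x₀ ≤ f x) (x : E) :
    ‖gradient f x‖ ^ 2 ≤ 2 * L * (f x - f x₀) := by
  have hdescent := le_add_inner_gradient_add_sq_of_lipschitz_gradient hf hL
  rcases le_or_gt L 0 with hL0 | hL0
  · -- For `L ≤ 0` the gradient is constant, hence zero, and the descent lemma gives `f ≤ f x₀`.
    have hgrad : gradient f x = 0 := by
      have h := hL x x₀
      rw [hx₀, sub_zero] at h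
      exact norm_le_zero_iff.1 (h.trans (mul_nonpos_of_nonpos_of_nonneg hL0 (norm_nonneg _)))
    have hfx : f x ≤ f x₀ := by
      have h := hdescent x₀ x
      rw [hx₀, inner_zero_left] at h
      nlinarith [sq_nonneg ‖x - x₀‖]
    rw [hgrad, norm_zero]
    nlinarith [hmin x]
  · set g := gradient f x
    have h := (hmin _).trans (hdescent x (x - L⁻¹ • g))
    rw [sub_sub_cancel_left, inner_neg_right, real_inner_smul_right, real_inner_self_eq_norm_sq,
      norm_neg, norm_smul, Real.norm_of_nonneg (inv_nonneg.2 hL0.le)] at h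
    have hstep : L⁻¹ * ‖g‖ ^ 2 / 2 ≤ f x - f x₀ := by
      have : L / 2 * (L⁻¹ * ‖g‖) ^ 2 = L⁻¹ * ‖g‖ ^ 2 / 2 := by field_simp
      linarith
    rw [div_le_iff₀ two_pos, inv_mul_le_iff₀ hL0] at hstep
    linarith

end

theorem one_step_contraction_det_general {d : ℕ}
    (W : Set (EuclideanSpace ℝ (Fin d)))
    (R : ℝ) (hWdiam : ∀ w w', w ∈ W → w' ∈ W → ‖w - w'‖ ≤ R)
    (f : EuclideanSpace ℝ (Fin d) → ℝ) (L : ℝ)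
    (hfconv : ConvexOn ℝ Set.univ f)
    (hfdiff : Differentiable ℝ f)
    (hfL : ∀ x y, ‖gradient f x - gradient f y‖ ≤ L * ‖x - y‖)
    (wstar : EuclideanSpace ℝ (Fin d)) (hwstarW : wstar ∈ W)
    (hgradstar : gradient f wstar = 0)
    (hmin : ∀ x, f wstar ≤ f x)
    (w : EuclideanSpace ℝ (Fin d)) (hwW : w ∈ W)
    (ε : ℝ)
    (e : EuclideanSpace ℝ (Fin d)) (he : ‖e‖ ≤ ε)
    (α : ℝ) (hα : 0 < α)
    (wplus : EuclideanSpace ℝ (Fin d))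
    (hwplus : wplus = w - α • (gradient f w + e)) :
    ‖wplus - wstar‖ ^ 2
      ≤ ‖w - wstar‖ ^ 2 - (2 * α - 4 * L * α ^ 2) * (f w - f wstar)
        + 2 * α ^ 2 * ε ^ 2 + 2 * α * ε * R := by
  set g := gradient f w
  have hexpand : ‖wplus - wstar‖ ^ 2
      = ‖w - wstar‖ ^ 2 - 2 * α * (⟪g, w - wstar⟫ + ⟪e, w - wstar⟫) + α ^ 2 * ‖g + e‖ ^ 2 := by
    rw [hwplus, sub_right_comm, norm_sub_sq_real, real_inner_smul_right, norm_smul, mul_pow,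
      Real.norm_eq_abs, sq_abs, real_inner_comm, inner_add_left]
    ring
  have hgap : f w - f wstar ≤ ⟪g, w - wstar⟫ := by
    have h := hfconv.add_inner_gradient_le (hfdiff w) wstar
    rw [← neg_sub, inner_neg_right] at h
    linarith
  have hgrad := norm_sq_gradient_le_of_lipschitz_gradient hfdiff hfL hgradstar hmin w
  have hsum : ‖g + e‖ ^ 2 ≤ 2 * ‖g‖ ^ 2 + 2 * ‖e‖ ^ 2 := by
    nlinarith [norm_add_le g e, norm_nonneg (g + e), sq_nonneg (‖g‖ - ‖e‖)]
  have hnoise : -⟪e, w - wstar⟫ ≤ ε * R :=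
    calc -⟪e, w - wstar⟫ ≤ ‖e‖ * ‖w - wstar‖ := (neg_le_abs _).trans (abs_real_inner_le_norm _ _)
      _ ≤ ε * R := mul_le_mul he (hWdiam w wstar hwW hwstarW) (norm_nonneg _)
          ((norm_nonneg e).trans he)
  have he2 : ‖e‖ ^ 2 ≤ ε ^ 2 := pow_le_pow_left₀ (norm_nonneg e) he 2
  rw [hexpand]
  linear_combination (2 * α) * hgap + (2 * α) * hnoise + α ^ 2 * (hsum + 2 * hgrad + 2 * he2)

/-- Deterministic one-step squared-distance contraction for inexact gradient
descent: if `W ⊆ ℝ^d` is convex with diameter at most `R`, `f` is convex and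
differentiable with `L`-Lipschitz gradient, attains its minimum at `wstar ∈ W`
with vanishing gradient, `w ∈ W`, `‖e‖ ≤ ε`, and
`w⁺ = w − α(∇f(w) + e)`, then
`‖w⁺ − w*‖² ≤ ‖w − w*‖² − (2α − 4Lα²)(f(w) − f(w*)) + 2α²ε² + 2αεR`. -/
theorem one_step_contraction_det {d : ℕ}
    (W : Set (EuclideanSpace ℝ (Fin d))) (hWconv : Convex ℝ W)
    (R : ℝ) (hWdiam : ∀ w w', w ∈ W → w' ∈ W → ‖w - w'‖ ≤ R)
    (f : EuclideanSpace ℝ (Fin d) → ℝ) (L : ℝ)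
    (hfconv : ConvexOn ℝ Set.univ f)
    (hfdiff : Differentiable ℝ f)
    (hfL : ∀ x y, ‖gradient f x - gradient f y‖ ≤ L * ‖x - y‖)
    (wstar : EuclideanSpace ℝ (Fin d)) (hwstarW : wstar ∈ W)
    (hgradstar : gradient f wstar = 0)
    (hmin : ∀ x, f wstar ≤ f x)
    (w : EuclideanSpace ℝ (Fin d)) (hwW : w ∈ W)
    (ε : ℝ) (hε : 0 ≤ ε)
    (e : EuclideanSpace ℝ (Fin d)) (he : ‖e‖ ≤ ε)
    (α : ℝ) (hα : 0 < α)
    (wplus : EuclideanSpace ℝ (Fin d))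
    (hwplus : wplus = w - α • (gradient f w + e)) :
    ‖wplus - wstar‖ ^ 2
      ≤ ‖w - wstar‖ ^ 2 - (2 * α - 4 * L * α ^ 2) * (f w - f wstar)
        + 2 * α ^ 2 * ε ^ 2 + 2 * α * ε * R :=
  one_step_contraction_det_general W R hWdiam f L hfconv hfdiff hfL wstar hwstarW hgradstar hmin w
    hwW ε e he α hα wplus hwplus
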